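/- Explicit prompt formula for link transformations: with f(A, X) = 𝟙ᵀ(A + (1+ε)I)·X·Θ, D = Σ_{ij}A_{ij}, D + N + Nε ≠ 0, and ΔA = A' − A, the row vector p = (𝟙ᵀ·ΔA·X)/(D + N + Nε) satisfies f(A, X + 𝟙·p) = f(A', X). -/

import Mathlib

/-!
The sum readout `𝟙ᵀ M Y` is linear in `Y`, and on the prompt matrix `𝟙 p` it equals `s • p`,
where `s` is the sum of all entries of `M`. For `M = A + (1 + ε) I` this sum is `D + N + N ε`,
so the prompt contributes exactly `𝟙ᵀ ΔA X`, which is the difference between the readouts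
of `(A' + (1 + ε) I) X` and `(A + (1 + ε) I) X`.
-/

open Matrix BigOperators

/-- One-layer linear GIN with sum readout: 𝟙ᵀ (A + (1+ε) I) X Θ as a row vector. -/
noncomputable def gin {n : Type*} [Fintype n] [DecidableEq n] {F Fp : ℕ}
    (ε : ℝ) (Θ : Matrix (Fin F) (Fin Fp) ℝ)
    (A : Matrix n n ℝ) (X : Matrix n (Fin F) ℝ) : Fin Fp → ℝ :=
  fun j => ∑ i, ((A + (1 + ε) • (1 : Matrix n n ℝ)) * X * Θ) i j

/-- 𝟙·p : the matrix each of whose rows is the row vector p. -/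
def prompt (n : Type*) {F : ℕ} (p : Fin F → ℝ) : Matrix n (Fin F) ℝ :=
  Matrix.of fun _ j => p j

section

variable {n α : Type*} [Fintype n]

lemma one_vecMul_dotProduct_one [NonAssocSemiring α] (M : Matrix n n α) :
    (1 ᵥ* M) ⬝ᵥ 1 = ∑ i, ∑ j, M i j := by
  simp only [dotProduct_one, vecMul, one_dotProduct]
  exact Finset.sum_comm

lemma sum_sum_add_smul_one [DecidableEq n] [CommSemiring α] (A : Matrix n n α) (c : α) :
    ∑ i, ∑ j, (A + c • (1 : Matrix n n α)) i j = ∑ i, ∑ j, A i j + Fintype.card n * c := by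
  simp [Finset.sum_add_distrib, one_apply]

end

lemma prompt_eq_vecMulVec (n : Type*) {F : ℕ} (p : Fin F → ℝ) : prompt n p = vecMulVec 1 p := by
  ext i j
  simp [prompt, vecMulVec_apply]

lemma one_vecMul_mul_prompt {n : Type*} [Fintype n] {F : ℕ} (M : Matrix n n ℝ)
    (p : Fin F → ℝ) : 1 ᵥ* (M * prompt n p) = (∑ i, ∑ j, M i j) • p := by
  rw [prompt_eq_vecMulVec, ← vecMul_vecMul, vecMul_vecMulVec, one_vecMul_dotProduct_one]

lemma gin_eq_vecMul {n : Type*} [Fintype n] [DecidableEq n] {F Fp : ℕ}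
    (ε : ℝ) (Θ : Matrix (Fin F) (Fin Fp) ℝ) (A : Matrix n n ℝ) (X : Matrix n (Fin F) ℝ) :
    gin ε Θ A X = (1 ᵥ* ((A + (1 + ε) • 1) * X)) ᵥ* Θ := by
  rw [vecMul_vecMul]
  ext j
  exact (one_dotProduct _).symm

theorem stmt5 (N F Fp : ℕ) (A A' : Matrix (Fin N) (Fin N) ℝ)
    (X : Matrix (Fin N) (Fin F) ℝ) (ε : ℝ) (Θ : Matrix (Fin F) (Fin Fp) ℝ)
    (hD : (∑ i, ∑ j, A i j) + N + N * ε ≠ 0)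
    (p : Fin F → ℝ)
    (hp : p = fun j => (∑ i, ((A' - A) * X) i j) / ((∑ i, ∑ j, A i j) + N + N * ε)) :
    gin ε Θ A (X + prompt (Fin N) p) = gin ε Θ A' X := by
  have hprompt : 1 ᵥ* ((A + (1 + ε) • 1) * prompt (Fin N) p) = 1 ᵥ* ((A' - A) * X) :=
    calc 1 ᵥ* ((A + (1 + ε) • 1) * prompt (Fin N) p)
        = ((∑ i, ∑ j, A i j) + N + N * ε) • p := by
          rw [one_vecMul_mul_prompt, sum_sum_add_smul_one, Fintype.card_fin, mul_one_add,
            add_assoc]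
      _ = 1 ᵥ* ((A' - A) * X) := by
          ext j
          rw [hp, Pi.smul_apply, smul_eq_mul, mul_div_cancel₀ _ hD, vecMul, one_dotProduct]
  rw [gin_eq_vecMul, gin_eq_vecMul, Matrix.mul_add, vecMul_add, hprompt, ← vecMul_add,
    ← Matrix.add_mul]
  congr 3
  abel
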